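/- arXiv:1206.3437 — 6 statements merged into one kernel-verified Lean document; each statement's English description precedes it below -/
import Mathlib

section
/- If a directed graph G contains a Hamiltonian path from s to e, then its reduced graph contains a Hamiltonian path from the SCC of s to the SCC of e. -/
variable {V : Type*}

/-- Reachability in a directed graph given by arc relation `A`. -/
def Reach (A : V → V → Prop) : V → V → Prop := Relation.ReflTransGen A

/-- Two vertices are in the same strongly connected component. -/
def SameSCC (A : V → V → Prop) (u v : V) : Prop := Reach A u v ∧ Reach A v u

/-- The strongly connected component of a vertex. -/
def sccOf (A : V → V → Prop) (v : V) : Set V := {u | SameSCC A v u}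

/-- A set is a strongly connected component. -/
def IsSCC (A : V → V → Prop) (X : Set V) : Prop := ∃ v, X = sccOf A v

/-- Arcs of the reduced graph (condensation): between distinct SCCs joined by an arc of `A`. -/
def CondArc (A : V → V → Prop) (X Y : Set V) : Prop :=
  IsSCC A X ∧ IsSCC A Y ∧ X ≠ Y ∧ ∃ u ∈ X, ∃ v ∈ Y, A u v

/-- A directed graph is acyclic: no arc lies on a directed cycle. -/
def Acyclic (A : V → V → Prop) : Prop := ∀ u v, A u v → ¬ Reach A v u

/-- A Hamiltonian path of the digraph `A`, as a duplicate-free list visiting every vertex. -/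
def IsHamList (A : V → V → Prop) (p : List V) : Prop :=
  p.Chain' A ∧ p.Nodup ∧ ∀ v, v ∈ p

/-- A Hamiltonian path from `s` to `e`. -/
def IsHamPath (A : V → V → Prop) (s e : V) (p : List V) : Prop :=
  IsHamList A p ∧ p.head? = some s ∧ p.getLast? = some e

/-- A Hamiltonian path of the reduced graph: a duplicate-free list of SCCs, chained by
condensation arcs, containing every SCC. -/
def RHamPath (A : V → V → Prop) (P : List (Set V)) : Prop :=
  (∀ X ∈ P, IsSCC A X) ∧ P.Chain' (CondArc A) ∧ P.Nodup ∧ ∀ X, IsSCC A X → X ∈ P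

/-!
The witness is the sequence of SCCs traversed by the path, with consecutive repetitions
collapsed. Along a path every vertex reaches all later ones, so this sequence is sorted by
reachability, which is antisymmetric on SCCs; hence each SCC is traversed in a single block,
and collapsing repetitions is the same as deleting duplicates. Consecutive blocks are joined
by an arc of the path, which is an arc of the reduced graph.
-/

namespace List

variable {α : Type*}

theorem head?_destutter' (R : α → α → Prop) [DecidableRel R] (a : α) (l : List α) :
    (l.destutter' R a).head? = some a := by
  induction l with
  | nil => rfl
  | cons b l ih => by_cases h : R a b <;> simp [h, ih]

theorem head?_destutter (R : α → α → Prop) [DecidableRel R] (l : List α) :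
    (l.destutter R).head? = l.head? := by
  cases l with
  | nil => rfl
  | cons a l => exact head?_destutter' R a l

theorem getLast?_destutter'_ne [DecidableEq α] (a : α) (l : List α) :
    (l.destutter' (· ≠ ·) a).getLast? = (a :: l).getLast? := by
  induction l generalizing a with
  | nil => rfl
  | cons b l ih =>
    by_cases h : a = b
    · subst h; simp [ih, getLast?_cons_cons]
    · rw [destutter'_cons_pos (R := (· ≠ ·)) l h, getLast?_cons, ih, getLast?_cons_cons,
        getLast?_cons, Option.getD_some]

theorem getLast?_destutter_ne [DecidableEq α] (l : List α) :
    (l.destutter (· ≠ ·)).getLast? = l.getLast? := by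
  cases l with
  | nil => rfl
  | cons a l => exact getLast?_destutter'_ne a l

theorem IsChain.destutter'_ne [DecidableEq α] {R : α → α → Prop} {a : α} {l : List α}
    (h : (a :: l).IsChain R) : (l.destutter' (· ≠ ·) a).IsChain (fun x y => x ≠ y ∧ R x y) := by
  induction l generalizing a with
  | nil => simp
  | cons b l ih =>
    obtain ⟨hab, hl⟩ := isChain_cons_cons.1 h
    by_cases hne : a = b
    · subst hne; simpa using ih hl
    · rw [destutter'_cons_pos (R := (· ≠ ·)) l hne]
      refine List.isChain_cons.2 ⟨?_, ih hl⟩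
      rw [head?_destutter']
      rintro _ ⟨⟩
      exact ⟨hne, hab⟩

theorem IsChain.destutter_ne [DecidableEq α] {R : α → α → Prop} {l : List α}
    (h : l.IsChain R) : (l.destutter (· ≠ ·)).IsChain (fun x y => x ≠ y ∧ R x y) := by
  cases l with
  | nil => simp
  | cons a l => exact h.destutter'_ne

end List

section Condensation

variable {A : V → V → Prop}

theorem sameSCC_equivalence (A : V → V → Prop) : Equivalence (SameSCC A) :=
  ⟨fun _ => ⟨.refl, .refl⟩, fun h => ⟨h.2, h.1⟩, fun h₁ h₂ => ⟨h₁.1.trans h₂.1, h₂.2.trans h₁.2⟩⟩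

theorem mem_sccOf_self (A : V → V → Prop) (v : V) : v ∈ sccOf A v :=
  (sameSCC_equivalence A).refl v

theorem sccOf_eq_sccOf_iff {u v : V} : sccOf A u = sccOf A v ↔ SameSCC A u v := by
  have hA := sameSCC_equivalence A
  exact ⟨fun h => (Set.ext_iff.1 h v).2 (mem_sccOf_self A v),
    fun h => Set.ext fun _ => ⟨hA.trans (hA.symm h), hA.trans h⟩⟩

instance (A : V → V → Prop) : Std.Antisymm (Relation.Map (Reach A) (sccOf A) (sccOf A)) where
  antisymm := by
    rintro _ _ ⟨u, v, huv, rfl, rfl⟩ ⟨v', u', hvu, hv, hu⟩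
    rw [sccOf_eq_sccOf_iff] at hv hu ⊢
    exact ⟨huv, hv.2.trans (hvu.trans hu.1)⟩

theorem condArc_sccOf {u v : V} (huv : A u v) (hne : sccOf A u ≠ sccOf A v) :
    CondArc A (sccOf A u) (sccOf A v) :=
  ⟨⟨u, rfl⟩, ⟨v, rfl⟩, hne, u, mem_sccOf_self A u, v, mem_sccOf_self A v, huv⟩

open Classical in
noncomputable def sccImage (A : V → V → Prop) (p : List V) : List (Set V) :=
  (p.map (sccOf A)).destutter (· ≠ ·)

open Classical in
theorem sccImage_eq_dedup {p : List V} (hp : p.IsChain A) :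
    sccImage A p = (p.map (sccOf A)).dedup := by
  have hreach : p.IsChain (Relation.ReflTransGen A) := hp.imp fun _ _ => .single
  have hsorted : (p.map (sccOf A)).Pairwise (Relation.Map (Reach A) (sccOf A) (sccOf A)) :=
    hreach.pairwise.map (sccOf A) fun u v h => ⟨u, v, h, rfl, rfl⟩
  exact hsorted.destutter_eq_dedup

theorem mem_sccImage {p : List V} (hp : p.IsChain A) {X : Set V} :
    X ∈ sccImage A p ↔ ∃ v ∈ p, sccOf A v = X := by
  classical
  rw [sccImage_eq_dedup hp, List.mem_dedup, List.mem_map]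

theorem nodup_sccImage {p : List V} (hp : p.IsChain A) : (sccImage A p).Nodup := by
  classical
  rw [sccImage_eq_dedup hp]
  exact List.nodup_dedup _

theorem isChain_condArc_sccImage {p : List V} (hp : p.IsChain A) :
    (sccImage A p).IsChain (CondArc A) :=
  have hstep : (p.map (sccOf A)).IsChain fun X Y => X ≠ Y → CondArc A X Y :=
    (List.isChain_map _).2 <| hp.imp fun _ _ => condArc_sccOf
  hstep.destutter_ne.imp fun _ _ h => h.2 h.1

theorem head?_sccImage (p : List V) : (sccImage A p).head? = p.head?.map (sccOf A) := by
  rw [sccImage, List.head?_destutter, List.head?_map]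

theorem getLast?_sccImage (p : List V) :
    (sccImage A p).getLast? = p.getLast?.map (sccOf A) := by
  rw [sccImage, List.getLast?_destutter_ne, List.getLast?_map]

end Condensation

/-- If `G` has a Hamiltonian path from `s` to `e`, then its reduced graph has a
Hamiltonian path from the SCC of `s` to the SCC of `e`. -/
theorem reduced_graph_hamiltonian_path_exists (A : V → V → Prop) (s e : V)
    (H : List V) (hH : IsHamPath A s e H) :
    ∃ P : List (Set V), RHamPath A P ∧
      P.head? = some (sccOf A s) ∧ P.getLast? = some (sccOf A e) := by
  obtain ⟨⟨hchain, -, hall⟩, hhead, hlast⟩ := hH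
  refine ⟨sccImage A H, ⟨?_, isChain_condArc_sccImage hchain, nodup_sccImage hchain, ?_⟩, ?_, ?_⟩
  · intro X hX
    obtain ⟨v, -, rfl⟩ := (mem_sccImage hchain).1 hX
    exact ⟨v, rfl⟩
  · rintro X ⟨v, rfl⟩
    exact (mem_sccImage hchain).2 ⟨v, hall v, rfl⟩
  · rw [head?_sccImage, hhead, Option.map_some]
  · rw [getLast?_sccImage, hlast, Option.map_some]
end

section
/- Let H be a Hamiltonian path of G from s to e, and let X be an SCC of G with e ∉ X. Then exactly one arc of H goes from a vertex of X to a vertex outside X. -/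
variable {V : Type*}

/-!
Along the Hamiltonian path every vertex reaches every later one, so an SCC `X` is convex
along `H`: a vertex lying between two vertices of `X` reaches `X` and is reached from it.
Hence `X` occupies a single segment of `H`, which does not contain the last vertex `e`;
the unique arc of `H` leaving `X` is the one leaving that segment.
-/

def RelConvex {α : Type*} (R : α → α → Prop) (S : Set α) : Prop :=
  ∀ ⦃x y z⦄, x ∈ S → z ∈ S → R x y → R y z → y ∈ S

theorem relConvex_sccOf (A : V → V → Prop) (v : V) : RelConvex (Reach A) (sccOf A v) :=
  fun _ _ _ hx hz hxy hyz => ⟨hx.1.trans hxy, hyz.trans hz.2⟩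

theorem List.IsChain.pairwise_reach {A : V → V → Prop} {l : List V} (hl : l.IsChain A) :
    l.Pairwise (Reach A) :=
  (isChain_iff_pairwise (R := Relation.ReflTransGen A)).mp (hl.imp fun _ _ => .single)

namespace List

variable {α : Type*} {R : α → α → Prop} {S : Set α}

theorem pair_infix_cons_cons {a b x y : α} {t : List α} :
    [a, b] <:+: x :: y :: t ↔ (a = x ∧ b = y) ∨ [a, b] <:+: y :: t := by
  simp [infix_cons_iff, cons_prefix_cons]

theorem Pairwise.forall_notMem_of_exit (hS : RelConvex R S) {x y : α} {t : List α}
    (hl : (x :: y :: t).Pairwise R) (hx : x ∈ S) (hy : y ∉ S) : ∀ a ∈ y :: t, a ∉ S := by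
  rintro a ha haS
  rw [pairwise_cons, pairwise_cons] at hl
  rcases mem_cons.mp ha with rfl | ha
  · exact hy haS
  · exact hy (hS hx haS (hl.1 y mem_cons_self) (hl.2.1 a ha))

theorem Pairwise.existsUnique_exit_pair (hS : RelConvex R S) {l : List α} (hl : l.Pairwise R)
    (hmem : ∃ x ∈ l, x ∈ S) {e : α} (hlast : l.getLast? = some e) (he : e ∉ S) :
    ∃! a : α × α, [a.1, a.2] <:+: l ∧ a.1 ∈ S ∧ a.2 ∉ S := by
  induction l with
  | nil => simp at hlast
  | cons x t ih =>
    rcases t with _ | ⟨y, t⟩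
    · obtain rfl : x = e := by simpa using hlast
      simp_all
    by_cases hexit : x ∈ S ∧ y ∉ S
    · refine ⟨(x, y), ⟨infix_append [] _ t, hexit⟩, ?_⟩
      rintro ⟨a, b⟩ ⟨hab, ha, -⟩
      rcases pair_infix_cons_cons.mp hab with ⟨rfl, rfl⟩ | hab
      · rfl
      · exact absurd ha (hl.forall_notMem_of_exit hS hexit.1 hexit.2 a (hab.subset mem_cons_self))
    · have hmem' : ∃ z ∈ y :: t, z ∈ S := by
        by_cases hx : x ∈ S
        · exact ⟨y, mem_cons_self, by tauto⟩
        · obtain ⟨z, hz, hzS⟩ := hmem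
          exact ⟨z, (mem_cons.mp hz).resolve_left (by rintro rfl; exact hx hzS), hzS⟩
      refine (existsUnique_congr fun ⟨a, b⟩ => ?_).mpr
        (ih hl.of_cons hmem' (by simpa using hlast))
      rw [pair_infix_cons_cons]
      constructor
      · rintro ⟨⟨rfl, rfl⟩ | hab, hab'⟩
        · exact absurd hab' hexit
        · exact ⟨hab, hab'⟩
      · exact fun ⟨hab, hab'⟩ => ⟨Or.inr hab, hab'⟩

end List

/-- If `H` is a Hamiltonian path of `G` from `s` to `e` and `X` is an SCC with `e ∉ X`,
then exactly one arc of `H` goes from a vertex of `X` to a vertex outside `X`. -/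
theorem unique_outgoing_arc (A : V → V → Prop) (s e : V)
    (H : List V) (hH : IsHamPath A s e H)
    (X : Set V) (hX : IsSCC A X) (he : e ∉ X) :
    ∃! a : V × V, [a.1, a.2] <:+: H ∧ a.1 ∈ X ∧ a.2 ∉ X := by
  obtain ⟨⟨hchain, -, hmem⟩, -, hlast⟩ := hH
  obtain ⟨v, rfl⟩ := hX
  exact hchain.pairwise_reach.existsUnique_exit_pair (relConvex_sccOf A v)
    ⟨v, hmem v, .refl, .refl⟩ hlast he
end

section
/- Let X be an SCC of a directed graph G with a unique indoor vertex i (the unique vertex of X having a predecessor outside X), and suppose s ∉ X where s is the start of the sought Hamiltonian path. Then no Hamiltonian path of G from s to e contains an arc (j, i) with j ∈ X. -/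
variable {V : Type*}

lemma entry_lemma {A : V → V → Prop} {X : Set V} :
    ∀ (p : List V), p.Chain' A → ∀ s, p.head? = some s → s ∉ X →
    ∀ x, x ∈ p → x ∈ X →
    ∃ l u v r, p = l ++ u :: v :: r ∧ (∀ y ∈ l ++ [u], y ∉ X) ∧ v ∈ X ∧ A u v := by
  intro p
  induction p with
  | nil => intro _ s hs; simp at hs
  | cons a t ih =>
    intro hc s hhead hsX x hx hxX
    simp at hhead; subst hhead
    have hxt : x ∈ t := by
      rcases List.mem_cons.mp hx with h | h
      · exact absurd (h ▸ hxX) hsX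
      · exact h
    match t, hxt with
    | b :: t', hxt =>
      have hab : A a b := (List.isChain_cons_cons.mp hc).1
      by_cases hbX : b ∈ X
      · exact ⟨[], a, b, t', by simp, by simpa using hsX, hbX, hab⟩
      · obtain ⟨l, u, v, r, heq, hl, hvX, huv⟩ :=
          ih (List.isChain_cons_cons.mp hc).2 b rfl hbX x hxt hxX
        exact ⟨a :: l, u, v, r, by simp [heq], by
          intro y hy
          rcases List.mem_cons.mp hy with h | h
          · exact h ▸ hsX
          · exact hl y h, hvX, huv⟩

/-- If an SCC `X` (with `s ∉ X`) has a unique indoor `i`, then no Hamiltonian path of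
`G` from `s` to `e` contains an internal arc `(j, i)` with `j ∈ X`. -/
theorem unique_indoor_internal_arc_infeasible (A : V → V → Prop) (s e : V)
    (hs : ∀ u, ¬ A u s)
    (X : Set V) (hX : IsSCC A X) (hsX : s ∉ X)
    (i : V) (hiX : i ∈ X)
    (hindoor : ∃ u, u ∉ X ∧ A u i)
    (huniq : ∀ x ∈ X, (∃ u, u ∉ X ∧ A u x) → x = i) :
    ∀ j ∈ X, ∀ H : List V, IsHamPath A s e H → ¬ [j, i] <:+: H := by
  intro j hjX H hH hinf
  obtain ⟨⟨hc, hnd, hall⟩, hhead, -⟩ := hH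
  obtain ⟨l2, r2, heq2⟩ := hinf
  obtain ⟨l, u, v, r, heq, hl, hvX, huv⟩ :=
    entry_lemma H hc s hhead hsX i (hall i) hiX
  have hvi : v = i := huniq v hvX ⟨u, hl u (by simp), huv⟩
  subst hvi
  have h1 : l.length + 1 < H.length := by
    rw [heq]; simp
  have h2 : l2.length + 1 < H.length := by
    rw [← heq2]; simp
  have e1 : H[l.length + 1]'h1 = v := by
    simp only [heq]
    rw [List.getElem_append_right (by omega)]
    simp
  have e2 : H[l2.length + 1]'h2 = v := by
    have heq2' : H = l2 ++ j :: v :: r2 := by rw [← heq2]; simp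
    simp only [heq2']
    rw [List.getElem_append_right (by omega)]
    simp
  have hlen : l.length + 1 = l2.length + 1 := by
    rw [← hnd.getElem_inj_iff (hi := h1) (hj := h2), e1, e2]
  have hlen' : l.length = l2.length := by omega
  have heq3 : l ++ u :: v :: r = l2 ++ j :: v :: r2 := by
    rw [← heq, ← heq2]; simp
  obtain ⟨-, htail⟩ := List.append_inj heq3 hlen'
  have huj : u = j := (List.cons_eq_cons.mp htail).1
  exact hl u (by simp) (huj ▸ hjX)
end

section
/- Symmetrically: if an SCC X of G has a unique outdoor vertex i (the unique vertex of X with a successor outside X), and e ∉ X, then no Hamiltonian path of G from s to e contains an arc (i, j) with j ∈ X. -/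
/-!
After the arc `(i, j)` the path still has to get from `j ∈ X` to `e ∉ X`, so it leaves `X` along
some arc whose tail is an outdoor of `X`, i.e. `i` itself. A Hamiltonian path does not visit `i`
twice.
-/

variable {V : Type*}

theorem List.IsChain.exists_rel_leaving {α : Type*} {R : α → α → Prop} {p : α → Prop}
    {x y : α} {l : List α} (hc : (x :: l).IsChain R) (hx : p x) (hy : y ∈ x :: l) (hpy : ¬ p y) :
    ∃ a ∈ x :: l, ∃ b, R a b ∧ p a ∧ ¬ p b := by
  induction l generalizing x with
  | nil => exact absurd (List.mem_singleton.mp hy ▸ hx) hpy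
  | cons z l ih =>
    obtain ⟨hxz, hc⟩ := List.isChain_cons_cons.mp hc
    by_cases hz : p z
    · have hy' : y ∈ z :: l := (List.mem_cons.mp hy).resolve_left (by rintro rfl; exact hpy hx)
      obtain ⟨a, ha, b, hab⟩ := ih hc hz hy'
      exact ⟨a, List.mem_cons_of_mem x ha, b, hab⟩
    · exact ⟨x, List.mem_cons_self, z, hxz, hx, hz⟩

theorem unique_outdoor_internal_arc_infeasible_general (A : V → V → Prop) (s e : V)
    (X : Set V) (heX : e ∉ X)
    (i : V)
    (huniq : ∀ x ∈ X, (∃ u, u ∉ X ∧ A x u) → x = i) :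
    ∀ j ∈ X, ∀ H : List V, IsHamPath A s e H → ¬ [i, j] <:+: H := by
  rintro j hjX H ⟨⟨hchain, hnodup, -⟩, -, hlast⟩ ⟨t, r, rfl⟩
  have hsplit : t ++ [i, j] ++ r = t ++ i :: j :: r := by simp
  rw [hsplit] at hchain hnodup hlast
  rw [List.getLast?_append_cons, List.getLast?_cons_cons] at hlast
  have he : e ∈ j :: r := List.mem_of_getLast? hlast
  have hi : i ∉ j :: r := (List.nodup_cons.mp hnodup.of_append_right).1
  obtain ⟨a, ha, b, hab, haX, hbX⟩ :=
    (hchain.suffix ⟨t ++ [i], by simp⟩).exists_rel_leaving hjX he heX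
  exact hi (huniq a haX ⟨b, hbX, hab⟩ ▸ ha)

/-- If an SCC `X` (with `e ∉ X`) has a unique outdoor `i`, then no Hamiltonian path of
`G` from `s` to `e` contains an internal arc `(i, j)` with `j ∈ X`. -/
theorem unique_outdoor_internal_arc_infeasible (A : V → V → Prop) (s e : V)
    (he : ∀ u, ¬ A e u)
    (X : Set V) (hX : IsSCC A X) (heX : e ∉ X)
    (i : V) (hiX : i ∈ X)
    (houtdoor : ∃ u, u ∉ X ∧ A i u)
    (huniq : ∀ x ∈ X, (∃ u, u ∉ X ∧ A x u) → x = i) :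
    ∀ j ∈ X, ∀ H : List V, IsHamPath A s e H → ¬ [i, j] <:+: H :=
  unique_outdoor_internal_arc_infeasible_general A s e X heX i huniq
end

section
/- If an SCC X of G with |X| > 2 has exactly two doors i and j, then no Hamiltonian path of G from s to e (with s, e ∉ X) contains the arc (i, j) or the arc (j, i). -/
variable {V : Type*}

/-- A vertex of an SCC `X` is a door if it has a predecessor or a successor outside `X`. -/
def IsDoor (A : V → V → Prop) (X : Set V) (x : V) : Prop :=
  (∃ u, u ∉ X ∧ A u x) ∨ (∃ u, u ∉ X ∧ A x u)

/-!
Since `|X| > 2`, the path visits some `x ∈ X` other than `i` and `j`. If it uses the arc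
`i → j`, then `x` comes before `i` or after `j`. In the first case the segment from `s ∉ X`
to `x` enters `X` through an arc `u → w` with `u ∉ X`, so `w` is a door visited before `i`,
hence `w ∈ {i, j}` is visited twice; the second case is the mirror image, the segment from `x`
to `e ∉ X` leaving `X` through a door after `j`.
-/

theorem List.exists_infix_notMem_mem {α : Type*} {X : Set α} :
    ∀ {l : List α}, (∀ a ∈ l.head?, a ∉ X) → ∀ x ∈ l, x ∈ X → ∃ u ∉ X, ∃ w ∈ X, [u, w] <:+: l
  | [], _, _, hx, _ => absurd hx List.not_mem_nil
  | [a], ha, x, hx, hxX => by simp_all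
  | a :: b :: l, ha, x, hx, hxX => by
    have haX : a ∉ X := ha a rfl
    by_cases hbX : b ∈ X
    · exact ⟨a, haX, b, hbX, List.infix_append [] _ l⟩
    · have hx' : x ∈ b :: l := (List.mem_cons.mp hx).resolve_left (by rintro rfl; exact haX hxX)
      obtain ⟨u, hu, w, hw, hinf⟩ :=
        exists_infix_notMem_mem (l := b :: l) (by simpa using hbX) x hx' hxX
      exact ⟨u, hu, w, hw, List.infix_cons hinf⟩

theorem List.Nodup.notMem_append_of_infix_pair {α : Type*} {l r : List α} {i j : α}
    (h : (l ++ [i, j] ++ r).Nodup) : i ∉ l ++ r ∧ j ∉ l ++ r := by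
  simp only [List.nodup_append, List.nodup_cons, List.mem_append, List.mem_cons] at h
  grind

section Doors

variable {A : V → V → Prop} {X : Set V} {l : List V} {x : V}

theorem exists_door_mem_of_head?_notMem (hl : l.IsChain A) {s : V} (hs : l.head? = some s)
    (hsX : s ∉ X) (hxl : x ∈ l) (hxX : x ∈ X) : ∃ w ∈ l, w ∈ X ∧ IsDoor A X w := by
  obtain ⟨u, huX, w, hwX, hinf⟩ :=
    List.exists_infix_notMem_mem (by simpa [hs] using hsX) x hxl hxX
  have huw : A u w := by simpa using hl.infix hinf
  exact ⟨w, hinf.subset (by simp), hwX, Or.inl ⟨u, huX, huw⟩⟩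

theorem exists_door_mem_of_getLast?_notMem (hl : l.IsChain A) {e : V} (he : l.getLast? = some e)
    (heX : e ∉ X) (hxl : x ∈ l) (hxX : x ∈ X) : ∃ w ∈ l, w ∈ X ∧ IsDoor A X w := by
  obtain ⟨w, hwl, hwX, hdoor⟩ := exists_door_mem_of_head?_notMem (A := fun a b => A b a)
    (List.isChain_reverse.mpr hl) (by rwa [List.head?_reverse]) heX (List.mem_reverse.mpr hxl) hxX
  exact ⟨w, List.mem_reverse.mp hwl, hwX, hdoor.symm⟩

theorem IsHamPath.not_infix_of_only_doors {s e : V} {H : List V} (hH : IsHamPath A s e H)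
    (hsX : s ∉ X) (heX : e ∉ X) {i j : V} (honly : ∀ x ∈ X, IsDoor A X x → x = i ∨ x = j)
    (hxX : x ∈ X) (hxi : x ≠ i) (hxj : x ≠ j) : ¬ [i, j] <:+: H := by
  rintro ⟨l, r, rfl⟩
  obtain ⟨⟨hchain, hnodup, hall⟩, hhead, hlast⟩ := hH
  obtain ⟨hi, hj⟩ := hnodup.notMem_append_of_infix_pair
  suffices ∃ w ∈ l ++ r, w ∈ X ∧ IsDoor A X w by
    obtain ⟨w, hw, hwX, hdoor⟩ := this
    rcases honly w hwX hdoor with rfl | rfl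
    exacts [hi hw, hj hw]
  rcases List.mem_append.mp (by simpa [hxi, hxj] using hall x : x ∈ l ++ r) with hxl | hxr
  · rw [List.append_assoc, List.head?_append_of_ne_nil _ (List.ne_nil_of_mem hxl)] at hhead
    obtain ⟨w, hwl, hw⟩ := exists_door_mem_of_head?_notMem
      hchain.left_of_append.left_of_append hhead hsX hxl hxX
    exact ⟨w, List.mem_append_left r hwl, hw⟩
  · rw [List.getLast?_append_of_ne_nil _ (List.ne_nil_of_mem hxr)] at hlast
    obtain ⟨w, hwr, hw⟩ := exists_door_mem_of_getLast?_notMem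
      hchain.right_of_append hlast heX hxr hxX
    exact ⟨w, List.mem_append_right l hwr, hw⟩

end Doors

theorem two_doors_arcs_infeasible_general (A : V → V → Prop) (s e : V)
    (X : Set V) (hcard : 2 < X.ncard)
    (hsX : s ∉ X) (heX : e ∉ X)
    (i j : V)
    (honly : ∀ x ∈ X, IsDoor A X x → x = i ∨ x = j) :
    ∀ H : List V, IsHamPath A s e H → ¬ [i, j] <:+: H ∧ ¬ [j, i] <:+: H := by
  obtain ⟨x, hxX, hxij⟩ : ∃ x ∈ X, x ∉ ({i, j} : Set V) :=
    Set.exists_mem_notMem_of_ncard_lt_ncard <|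
      ((Set.ncard_insert_le i {j}).trans (by rw [Set.ncard_singleton])).trans_lt hcard
  obtain ⟨hxi, hxj⟩ : x ≠ i ∧ x ≠ j := by simpa [not_or] using hxij
  intro H hH
  exact ⟨hH.not_infix_of_only_doors hsX heX honly hxX hxi hxj,
    hH.not_infix_of_only_doors hsX heX (fun y hy hd => (honly y hy hd).symm) hxX hxj hxi⟩

/-- If an SCC `X` with more than two vertices has exactly two doors `i` and `j`, then no
Hamiltonian path of `G` from `s` to `e` (with `s, e ∉ X`) contains arc `(i,j)` or `(j,i)`. -/
theorem two_doors_arcs_infeasible (A : V → V → Prop) (s e : V)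
    (X : Set V) (hX : IsSCC A X) (hcard : 2 < X.ncard)
    (hsX : s ∉ X) (heX : e ∉ X)
    (i j : V) (hij : i ≠ j) (hiX : i ∈ X) (hjX : j ∈ X)
    (hi : IsDoor A X i) (hj : IsDoor A X j)
    (honly : ∀ x ∈ X, IsDoor A X x → x = i ∨ x = j) :
    ∀ H : List V, IsHamPath A s e H → ¬ [i, j] <:+: H ∧ ¬ [j, i] <:+: H :=
  two_doors_arcs_infeasible_general A s e X hcard hsX heX i j honly
end

section
/- If a Hamiltonian path of G from s to e exists and X is an SCC of G with exactly one arc (u, v) in outArcs(X) (X not containing e), then every Hamiltonian path of G from s to e contains the arc (u, v). -/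
variable {V : Type*}

private lemma crossing_aux (X : Set V) : ∀ (p : List V) (x : V), x ∈ p → x ∈ X →
    ∀ e, p.getLast? = some e → e ∉ X →
    ∃ a b, a ∈ X ∧ b ∉ X ∧ [a, b] <:+: p := by
  intro p
  induction p with
  | nil => intro x hx; simp at hx
  | cons c q ih =>
    intro x hx hxX e hlast heX
    cases q with
    | nil =>
      simp at hx hlast
      subst hx; subst hlast; exact absurd hxX heX
    | cons d r =>
      by_cases hc : c ∈ X
      · by_cases hd : d ∈ X
        · obtain ⟨a, b, h1, h2, h3⟩ := ih d (by simp) hd e (by simpa using hlast) heX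
          exact ⟨a, b, h1, h2, h3.trans (List.suffix_cons c _).isInfix⟩
        · exact ⟨c, d, hc, hd, ⟨[], r, rfl⟩⟩
      · have hxq : x ∈ d :: r := by
          rcases hx with _ | hx
          · exact absurd hxX hc
          · assumption
        obtain ⟨a, b, h1, h2, h3⟩ := ih x hxq hxX e (by simpa using hlast) heX
        exact ⟨a, b, h1, h2, h3.trans (List.suffix_cons c _).isInfix⟩

/-- If a Hamiltonian path from `s` to `e` exists and the SCC `X` (not containing `e`)
has exactly one outgoing arc `(u, v)`, then every Hamiltonian path of `G` from `s` to
`e` contains the arc `(u, v)`. -/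
theorem unique_out_arc_mandatory (A : V → V → Prop) (s e : V)
    (hex : ∃ H0 : List V, IsHamPath A s e H0)
    (X : Set V) (hX : IsSCC A X) (heX : e ∉ X)
    (u v : V) (hout : {a : V × V | A a.1 a.2 ∧ a.1 ∈ X ∧ a.2 ∉ X} = {(u, v)}) :
    ∀ H : List V, IsHamPath A s e H → [u, v] <:+: H := by
  intro H hH
  obtain ⟨⟨hchain, _, hall⟩, _, hlast⟩ := hH
  obtain ⟨w, rfl⟩ := hX
  have hwX : w ∈ sccOf A w := ⟨Relation.ReflTransGen.refl, Relation.ReflTransGen.refl⟩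
  obtain ⟨a, b, haX, hbX, hinf⟩ := crossing_aux (sccOf A w) H w (hall w) hwX e hlast heX
  have hab : A a b := by simpa using hchain.infix hinf
  have : ((a, b) : V × V) ∈ {a : V × V | A a.1 a.2 ∧ a.1 ∈ sccOf A w ∧ a.2 ∉ sccOf A w} :=
    ⟨hab, haX, hbX⟩
  rw [hout] at this
  simp only [Set.mem_singleton_iff, Prod.mk.injEq] at this
  obtain ⟨rfl, rfl⟩ := this
  exact hinf
end
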